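/- arXiv:1911.03647 — 3 statements merged into one kernel-verified Lean document; each statement's English description precedes it below -/
import Mathlib

section
/- Let H be a Hilbert space, X a closed subspace with orthogonal projection P onto X. Suppose there is a constant C > 0 such that ‖P u − u‖ ≤ C‖Q u‖ for all u, where Q : H → ℂ^g is a bounded linear map. If A : H → K is a bounded linear map into a Hilbert space K, W ⊆ K is a subset with Q₁|_W = 0 for a bounded linear Q₁ : K → ℂ^g satisfying Q = Q₁ ∘ A, and the image A(H) is dense in K, then A(X) is dense in the closure of W in K. -/
/-! If `A u` is close to a point `w` killed by `Q₁`, then `‖Q u‖ = ‖Q₁ (A u - w)‖` is small, so by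
the projection estimate `A (P u)` is close to `A u`, hence to `w`. Since `A` has dense range, this
puts every point of `W` in the closure of `A '' X`. -/

theorem mem_closure_range_of_dist_le {α β : Type*} [PseudoMetricSpace β] {f g : α → β} {w : β}
    {c : ℝ} (hc : 0 ≤ c) (hw : w ∈ closure (Set.range g))
    (hfg : ∀ a, dist (f a) w ≤ c * dist (g a) w) : w ∈ closure (Set.range f) := by
  rw [Metric.mem_closure_range_iff] at hw ⊢
  intro ε hε
  obtain ⟨a, ha⟩ := hw (ε / (c + 1)) (by positivity)
  refine ⟨a, ?_⟩
  calc dist w (f a) ≤ c * dist (g a) w := by rw [dist_comm]; exact hfg a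
    _ ≤ (c + 1) * dist w (g a) := by rw [dist_comm]; gcongr; linarith
    _ < (c + 1) * (ε / (c + 1)) := by gcongr
    _ = ε := by field_simp

theorem dist_map_le_of_norm_sub_le {𝕜 E F G : Type*} [NontriviallyNormedField 𝕜]
    [SeminormedAddCommGroup E] [SeminormedAddCommGroup F] [SeminormedAddCommGroup G]
    [NormedSpace 𝕜 E] [NormedSpace 𝕜 F] [NormedSpace 𝕜 G]
    {P : E → E} {A : E →L[𝕜] F} {Q₁ : F →L[𝕜] G} {C : ℝ} (hC : 0 ≤ C)
    (hP : ∀ u, ‖P u - u‖ ≤ C * ‖Q₁ (A u)‖) {w : F} (hw : Q₁ w = 0) (u : E) :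
    dist (A (P u)) w ≤ (‖A‖ * C * ‖Q₁‖ + 1) * dist (A u) w := by
  have hAPu : dist (A (P u)) (A u) ≤ ‖A‖ * C * ‖Q₁‖ * dist (A u) w :=
    calc dist (A (P u)) (A u) = ‖A (P u - u)‖ := by rw [map_sub, dist_eq_norm]
      _ ≤ ‖A‖ * (C * ‖Q₁ (A u)‖) := (A.le_opNorm _).trans (by gcongr; exact hP u)
      _ = ‖A‖ * (C * ‖Q₁ (A u - w)‖) := by rw [map_sub, hw, sub_zero]
      _ ≤ ‖A‖ * (C * (‖Q₁‖ * ‖A u - w‖)) := by gcongr; exact Q₁.le_opNorm _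
      _ = ‖A‖ * C * ‖Q₁‖ * dist (A u) w := by rw [dist_eq_norm]; ring
  linarith [dist_triangle (A (P u)) (A u) w]

theorem dense_image_of_projection_estimate_general
    {H K : Type*} [NormedAddCommGroup H] [InnerProductSpace ℂ H]
    [NormedAddCommGroup K] [InnerProductSpace ℂ K]
    (g : ℕ) (X : Submodule ℂ H) [CompleteSpace X]
    (C : ℝ) (hC : 0 < C)
    (Q : H →L[ℂ] EuclideanSpace ℂ (Fin g))
    (hPQ : ∀ u : H, ‖(X.orthogonalProjectionOnto u : H) - u‖ ≤ C * ‖Q u‖)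
    (A : H →L[ℂ] K) (W : Set K)
    (Q₁ : K →L[ℂ] EuclideanSpace ℂ (Fin g))
    (hW : ∀ w ∈ W, Q₁ w = 0)
    (hcomp : Q = Q₁.comp A)
    (hA : DenseRange A) :
    closure W ⊆ closure (A '' (X : Set H)) := by
  subst hcomp
  refine closure_minimal (fun w hw => ?_) isClosed_closure
  have hAPX : Set.range (fun u => A (X.orthogonalProjectionOnto u)) ⊆ A '' (X : Set H) := by
    rintro _ ⟨u, rfl⟩
    exact ⟨_, (X.orthogonalProjectionOnto u).2, rfl⟩
  exact closure_mono hAPX (mem_closure_range_of_dist_le (by positivity) (hA w)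
    (dist_map_le_of_norm_sub_le hC.le hPQ (hW w hw)))

/-- Abstract density lemma: if the projection error onto `X` is controlled by `‖Q u‖`,
`Q = Q₁ ∘ A`, `Q₁` annihilates `W`, and `A` has dense range, then `A(X)` is dense in the
closure of `W`. -/
theorem dense_image_of_projection_estimate
    {H K : Type*} [NormedAddCommGroup H] [InnerProductSpace ℂ H] [CompleteSpace H]
    [NormedAddCommGroup K] [InnerProductSpace ℂ K] [CompleteSpace K]
    (g : ℕ) (X : Submodule ℂ H) (hX : IsClosed (X : Set H)) [CompleteSpace X]
    (C : ℝ) (hC : 0 < C)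
    (Q : H →L[ℂ] EuclideanSpace ℂ (Fin g))
    (hPQ : ∀ u : H, ‖(X.orthogonalProjectionOnto u : H) - u‖ ≤ C * ‖Q u‖)
    (A : H →L[ℂ] K) (W : Set K)
    (Q₁ : K →L[ℂ] EuclideanSpace ℂ (Fin g))
    (hW : ∀ w ∈ W, Q₁ w = 0)
    (hcomp : Q = Q₁.comp A)
    (hA : DenseRange A) :
    closure W ⊆ closure (A '' (X : Set H)) :=
  dense_image_of_projection_estimate_general g X C hC Q hPQ A W Q₁ hW hcomp hA
end

section
/- Let Σ = {z ∈ ℂ : r < |z| < 1} for some 0 < r < 1, and fix z₀ with |z₀| > 1. The linear functional on the holomorphic Dirichlet space of Σ given by Λ(h) = the value at z₀ of the Cauchy-type integral (1/2πi)∮_{|w|=ρ} h(w)/(w−z₀) dw (independent of ρ ∈ (r,1)) is bounded with respect to the Dirichlet norm ‖h‖² = |h(p)|² + ∬_Σ |h'|² dA (p a fixed point of Σ), vanishes on restrictions to Σ of functions holomorphic on the unit disk 𝔻 with finite Dirichlet energy, but does not vanish identically on the Dirichlet space of Σ. -/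
/-!
The radius independence is Cauchy's theorem on the annulus, and the functional vanishes on
functions holomorphic in the disc because `g w / (w - z₀)` is then holomorphic on a disc around
the circle. For boundedness, `L w = log (1 - w / z₀)` is a primitive of `(w - z₀)⁻¹` on
`‖w‖ < ‖z₀‖`, so integrating by parts on each circle gives `∮ h w / (w - z₀) = -∮ h' L`.
Averaging this identity over the radii `ρ ∈ (a, b)` turns it into an area integral of `h' L` over
the subannulus `a < ‖z‖ < b`, which Cauchy–Schwarz bounds by `‖L‖₂ ‖h'‖₂`. Finally, Cauchy's
integral formula gives `∮ w⁻¹ / (w - z₀) = -2πi / z₀ ≠ 0`, and `w⁻¹` has finite Dirichlet energy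
since its derivative is continuous on the closed annulus.
-/

open MeasureTheory Metric Complex Set

theorem integral_norm_mul_norm_le_sqrt_mul_sqrt {α E : Type*} [MeasurableSpace α] {μ : Measure α}
    [NormedAddCommGroup E] {f g : α → E} (hf : MemLp f 2 μ) (hg : MemLp g 2 μ) :
    ∫ x, ‖f x‖ * ‖g x‖ ∂μ ≤ √(∫ x, ‖f x‖ ^ 2 ∂μ) * √(∫ x, ‖g x‖ ^ 2 ∂μ) := by
  have h2 : ENNReal.ofReal 2 = 2 := ENNReal.ofReal_ofNat 2
  have := integral_mul_norm_le_Lp_mul_Lq Real.HolderConjugate.two_two (h2 ▸ hf) (h2 ▸ hg)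
  simpa only [Real.rpow_two, ← Real.sqrt_eq_rpow] using this

theorem circleIntegral_mul_deriv_eq_neg {f f' g g' : ℂ → ℂ} {c : ℂ} {R : ℝ} (hR : 0 ≤ R)
    (hf : ∀ z ∈ sphere c R, HasDerivAt f (f' z) z) (hg : ∀ z ∈ sphere c R, HasDerivAt g (g' z) z)
    (hf' : ContinuousOn f' (sphere c R)) (hg' : ContinuousOn g' (sphere c R)) :
    (∮ z in C(c, R), f z * g' z) = -∮ z in C(c, R), f' z * g z := by
  have hfc : ContinuousOn f (sphere c R) := fun z hz => (hf z hz).continuousAt.continuousWithinAt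
  have hgc : ContinuousOn g (sphere c R) := fun z hz => (hg z hz).continuousAt.continuousWithinAt
  have hprod : (∮ z in C(c, R), (f' z * g z + f z * g' z)) = 0 :=
    circleIntegral.integral_eq_zero_of_hasDerivWithinAt hR fun z hz =>
      ((hf z hz).mul (hg z hz)).hasDerivWithinAt
  have hsplit := circleIntegral.integral_add ((hf'.mul hgc).circleIntegrable hR)
    ((hfc.mul hg').circleIntegrable hR)
  simp only [Pi.mul_apply] at hsplit
  rw [hsplit] at hprod
  exact eq_neg_of_add_eq_zero_right hprod

theorem circleIntegral_eq_setIntegral_Ioo {E : Type*} [NormedAddCommGroup E] [NormedSpace ℂ E]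
    (f : ℂ → E) (c : ℂ) (R : ℝ) :
    (∮ z in C(c, R), f z) =
      ∫ θ in Ioo (-Real.pi) Real.pi, (circleMap 0 R θ * I) • f (circleMap c R θ) := by
  have hper : Function.Periodic (fun θ => (circleMap 0 R θ * I) • f (circleMap c R θ))
      (2 * Real.pi) := fun θ => by
    simp only [periodic_circleMap 0 R θ, periodic_circleMap c R θ]
  have hshift := hper.intervalIntegral_add_eq 0 (-Real.pi)
  rw [zero_add, show -Real.pi + 2 * Real.pi = Real.pi by ring] at hshift
  simp only [circleIntegral, deriv_circleMap]
  rw [hshift, intervalIntegral.integral_of_le (by linarith [Real.pi_pos]),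
    integral_Ioc_eq_integral_Ioo]

namespace Complex

def annulus (r R : ℝ) : Set ℂ := {z | r < ‖z‖ ∧ ‖z‖ < R}

variable {r R : ℝ}

theorem isOpen_annulus (r R : ℝ) : IsOpen (annulus r R) :=
  isOpen_Ioo.preimage continuous_norm

theorem sphere_subset_annulus {ρ : ℝ} (hρ : ρ ∈ Ioo r R) : sphere (0 : ℂ) ρ ⊆ annulus r R := by
  intro z hz
  rw [mem_sphere_zero_iff_norm] at hz
  exact ⟨hz ▸ hρ.1, hz ▸ hρ.2⟩

theorem annulus_mono {r' R' : ℝ} (hr : r ≤ r') (hR : R' ≤ R) : annulus r' R' ⊆ annulus r R :=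
  fun _ hz => ⟨hr.trans_lt hz.1, hz.2.trans_le hR⟩

theorem closedBall_diff_ball_subset_annulus {a b : ℝ} (hra : r < a) (hbR : b < R) :
    closedBall (0 : ℂ) b \ ball 0 a ⊆ annulus r R := by
  rintro _ ⟨hzb, hza⟩
  rw [mem_closedBall_zero_iff] at hzb
  rw [mem_ball_zero_iff, not_lt] at hza
  exact ⟨hra.trans_le hza, hzb.trans_lt hbR⟩

theorem annulus_subset_closedBall_diff_ball : annulus r R ⊆ closedBall (0 : ℂ) R \ ball 0 r :=
  fun _ hz => ⟨mem_closedBall_zero_iff.2 hz.2.le, fun h => (mem_ball_zero_iff.1 h).not_gt hz.1⟩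

theorem integrableOn_annulus_of_continuousOn {E : Type*} [NormedAddCommGroup E] {g : ℂ → E}
    (hg : ContinuousOn g (closedBall 0 R \ ball 0 r)) : IntegrableOn g (annulus r R) :=
  (hg.integrableOn_compact ((isCompact_closedBall 0 R).diff isOpen_ball)).mono_set
    annulus_subset_closedBall_diff_ball

theorem memLp_two_annulus_of_continuousOn {E : Type*} [NormedAddCommGroup E] {g : ℂ → E}
    (hg : ContinuousOn g (closedBall 0 R \ ball 0 r)) :
    MemLp g 2 (volume.restrict (annulus r R)) :=
  (memLp_two_iff_integrable_sq_norm ((hg.mono annulus_subset_closedBall_diff_ball)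
    |>.aestronglyMeasurable (isOpen_annulus r R).measurableSet)).2
    (integrableOn_annulus_of_continuousOn (hg.norm.pow 2))

theorem circleIntegral_eq_of_differentiableOn_annulus {E : Type*} [NormedAddCommGroup E]
    [NormedSpace ℂ E] [CompleteSpace E] {f : ℂ → E} (hr : 0 ≤ r)
    (hf : DifferentiableOn ℂ f (annulus r R)) {ρ₁ ρ₂ : ℝ} (h₁ : ρ₁ ∈ Ioo r R) (h₂ : ρ₂ ∈ Ioo r R) :
    (∮ z in C(0, ρ₁), f z) = ∮ z in C(0, ρ₂), f z := by
  wlog hle : ρ₁ ≤ ρ₂ generalizing ρ₁ ρ₂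
  · exact (this h₂ h₁ (le_of_not_ge hle)).symm
  have hsub := closedBall_diff_ball_subset_annulus h₁.1 h₂.2
  refine (circleIntegral_eq_of_differentiable_on_annulus_off_countable (hr.trans_lt h₁.1) hle
    countable_empty (hf.continuousOn.mono hsub) fun z hz => ?_).symm
  exact hf.differentiableAt ((isOpen_annulus r R).mem_nhds
    (hsub ⟨ball_subset_closedBall hz.1.1, fun h => hz.1.2 (ball_subset_closedBall h)⟩))

theorem hasDerivAt_log_one_sub_div {z₀ w : ℂ} (hw : ‖w‖ < ‖z₀‖) :
    HasDerivAt (fun w => log (1 - w / z₀)) (w - z₀)⁻¹ w := by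
  have hz₀ : z₀ ≠ 0 := norm_pos_iff.1 ((norm_nonneg w).trans_lt hw)
  have hslit : 1 - w / z₀ ∈ slitPlane := by
    rw [sub_eq_add_neg]
    refine mem_slitPlane_of_norm_lt_one ?_
    rwa [norm_neg, norm_div, div_lt_one (norm_pos_iff.2 hz₀)]
  refine ((hasDerivAt_log hslit).comp w
    (((hasDerivAt_id w).div_const z₀).const_sub 1)).congr_deriv ?_
  have h1 : 1 - w / z₀ ≠ 0 := slitPlane_ne_zero hslit
  have hzw : z₀ - w ≠ 0 := sub_ne_zero.2 (ne_of_apply_ne norm hw.ne')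
  field_simp
  rw [← neg_sub z₀ w, div_neg, div_self hzw]

theorem circleIntegral_div_sub_eq_neg_deriv_mul_log (hr : 0 ≤ r) {z₀ : ℂ} (hR : R ≤ ‖z₀‖)
    {h : ℂ → ℂ} (hh : DifferentiableOn ℂ h (annulus r R)) {ρ : ℝ} (hρ : ρ ∈ Ioo r R) :
    (∮ w in C(0, ρ), h w / (w - z₀)) = -∮ w in C(0, ρ), deriv h w * log (1 - w / z₀) := by
  have hsphere := sphere_subset_annulus hρ
  simp_rw [div_eq_mul_inv]
  refine circleIntegral_mul_deriv_eq_neg (hr.trans hρ.1.le)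
    (fun z hz => (hh.differentiableAt ((isOpen_annulus r R).mem_nhds (hsphere hz))).hasDerivAt)
    (fun z hz => hasDerivAt_log_one_sub_div ?_)
    ((hh.deriv (isOpen_annulus r R)).continuousOn.mono hsphere) fun z hz => ?_
  · exact (hsphere hz).2.trans_le hR
  · exact ((continuousAt_id.sub continuousAt_const).inv₀
      (sub_ne_zero.2 (ne_of_apply_ne norm ((hsphere hz).2.trans_le hR).ne))).continuousWithinAt

theorem polarCoord_symm_eq_circleMap (q : ℝ × ℝ) :
    Complex.polarCoord.symm q = circleMap 0 q.1 q.2 := by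
  rw [Complex.polarCoord_symm_apply, circleMap, exp_mul_I, ← ofReal_cos, ← ofReal_sin]
  ring

theorem setIntegral_annulus_eq_setIntegral_polar {E : Type*} [NormedAddCommGroup E]
    [NormedSpace ℝ E] {a b : ℝ} (ha : 0 ≤ a) (G : ℂ → E) :
    ∫ z in annulus a b, G z =
      ∫ q in Ioo a b ×ˢ Ioo (-Real.pi) Real.pi, q.1 • G (circleMap 0 q.1 q.2) := by
  set S := Ioo a b ×ˢ Ioo (-Real.pi) Real.pi
  have hS : S ⊆ Complex.polarCoord.target := fun q hq => ⟨ha.trans_lt hq.1.1, hq.2⟩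
  have hmem : ∀ q ∈ Complex.polarCoord.target,
      Complex.polarCoord.symm q ∈ annulus a b ↔ q ∈ S := fun q hq => by
    simp [annulus, S, abs_of_pos (mem_Ioi.1 hq.1), hq.2]
  rw [← integral_indicator (isOpen_annulus a b).measurableSet,
    ← Complex.integral_comp_polarCoord_symm, ← inter_eq_right.2 hS,
    ← setIntegral_indicator (measurableSet_Ioo.prod measurableSet_Ioo)]
  refine setIntegral_congr_fun Complex.polarCoord.open_target.measurableSet fun q hq => ?_
  by_cases hq' : q ∈ S
  · rw [indicator_of_mem hq', indicator_of_mem ((hmem q hq).2 hq'), polarCoord_symm_eq_circleMap]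
  · rw [indicator_of_notMem hq', indicator_of_notMem (mt (hmem q hq).1 hq'), smul_zero]

theorem integral_circleIntegral_eq_setIntegral_annulus {F : ℂ → ℂ} {a b : ℝ} (ha : 0 ≤ a)
    (hF : ContinuousOn F (closedBall 0 b \ ball 0 a)) :
    ∫ ρ in Ioo a b, (∮ z in C(0, ρ), F z) = ∫ z in annulus a b, (z / ‖z‖ * I) * F z := by
  -- `dw = i ρ e^{iθ} dθ` on `C(0, ρ)` while `dA = ρ dρ dθ`, whence the factor `z / ‖z‖`.
  set H : ℝ × ℝ → ℂ := fun q => circleMap 0 q.1 q.2 * I * F (circleMap 0 q.1 q.2)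
  have hmaps : MapsTo (fun q : ℝ × ℝ => circleMap 0 q.1 q.2)
      (Icc a b ×ˢ Icc (-Real.pi) Real.pi) (closedBall 0 b \ ball 0 a) := fun q hq => by
    have hnorm : ‖circleMap 0 q.1 q.2‖ = q.1 := by
      rw [norm_circleMap_zero, abs_of_nonneg (ha.trans hq.1.1)]
    simp only [mem_sdiff, mem_closedBall_zero_iff, mem_ball_zero_iff, hnorm, not_lt]
    exact ⟨hq.1.2, hq.1.1⟩
  have hcircle : Continuous fun q : ℝ × ℝ => circleMap 0 q.1 q.2 := by
    simp only [circleMap]; fun_prop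
  have hH : IntegrableOn H (Ioo a b ×ˢ Ioo (-Real.pi) Real.pi) :=
    ((((hcircle.mul continuous_const).continuousOn).mul (hF.comp hcircle.continuousOn hmaps)
      ).integrableOn_compact (isCompact_Icc.prod isCompact_Icc)).mono_set
      (prod_mono Ioo_subset_Icc_self Ioo_subset_Icc_self)
  rw [setIntegral_annulus_eq_setIntegral_polar ha, Measure.volume_eq_prod,
    setIntegral_congr_fun (measurableSet_Ioo.prod measurableSet_Ioo) (g := H) fun q hq => ?_,
    setIntegral_prod H hH]
  · simp_rw [circleIntegral_eq_setIntegral_Ioo, smul_eq_mul, H]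
  · have hq1 : 0 < q.1 := ha.trans_lt hq.1.1
    have hne : (q.1 : ℂ) ≠ 0 := ofReal_ne_zero.2 hq1.ne'
    simp only [H, norm_circleMap_zero, abs_of_pos hq1, real_smul]
    field_simp

theorem mul_norm_circleIntegral_div_sub_le {a b : ℝ} (hr : 0 ≤ r) (hra : r < a) (hab : a ≤ b)
    (hbR : b < R) {z₀ : ℂ} (hR : R ≤ ‖z₀‖) {h : ℂ → ℂ} (hh : DifferentiableOn ℂ h (annulus r R))
    {ρ : ℝ} (hρ : ρ ∈ Ioo r R) :
    (b - a) * ‖∮ w in C(0, ρ), h w / (w - z₀)‖ ≤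
      √(∫ z in annulus a b, ‖deriv h z‖ ^ 2) * √(∫ z in annulus a b, ‖log (1 - z / z₀)‖ ^ 2) := by
  set Λ := ∮ w in C(0, ρ), h w / (w - z₀) with hΛdef
  have hsub := closedBall_diff_ball_subset_annulus hra hbR
  have hz₀ : ∀ w ∈ annulus r R, w - z₀ ≠ 0 := fun w hw =>
    sub_ne_zero.2 (ne_of_apply_ne norm (hw.2.trans_le hR).ne)
  have hh' : ContinuousOn (deriv h) (closedBall 0 b \ ball 0 a) :=
    (hh.deriv (isOpen_annulus r R)).continuousOn.mono hsub
  have hL : ContinuousOn (fun w => log (1 - w / z₀)) (closedBall 0 b \ ball 0 a) := fun w hw =>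
    (hasDerivAt_log_one_sub_div ((hsub hw).2.trans_le hR)).continuousAt.continuousWithinAt
  have hΛ : ∀ ρ' ∈ Ioo a b, (∮ w in C(0, ρ'), deriv h w * log (1 - w / z₀)) = -Λ := by
    intro ρ' hρ'
    have hρ'' : ρ' ∈ Ioo r R := ⟨hra.trans hρ'.1, hρ'.2.trans hbR⟩
    rw [hΛdef, circleIntegral_eq_of_differentiableOn_annulus (f := fun w => h w / (w - z₀)) hr
      (hh.div (differentiableOn_id.sub_const z₀) hz₀) hρ hρ'',
      circleIntegral_div_sub_eq_neg_deriv_mul_log hr hR hh hρ'', neg_neg]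
  have havg : (b - a) • -Λ = ∫ z in annulus a b, z / ‖z‖ * I * (deriv h z * log (1 - z / z₀)) := by
    rw [← integral_circleIntegral_eq_setIntegral_annulus
      (F := fun z => deriv h z * log (1 - z / z₀)) (hr.trans hra.le) (hh'.mul hL),
      setIntegral_congr_fun measurableSet_Ioo hΛ, setIntegral_const, Real.volume_real_Ioo_of_le hab]
  calc (b - a) * ‖Λ‖ = ‖(b - a) • -Λ‖ := by
        rw [norm_smul, norm_neg, Real.norm_of_nonneg (sub_nonneg.2 hab)]
    _ ≤ ∫ z in annulus a b, ‖deriv h z‖ * ‖log (1 - z / z₀)‖ := by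
        rw [havg]
        refine norm_integral_le_of_norm_le
          (integrableOn_annulus_of_continuousOn (hh'.norm.mul hL.norm)) (ae_of_all _ fun z => ?_)
        rw [norm_mul, norm_mul, norm_mul, norm_I, mul_one]
        refine mul_le_of_le_one_left (by positivity) ?_
        rw [norm_div, norm_real, norm_norm]
        exact div_self_le_one _
    _ ≤ _ := integral_norm_mul_norm_le_sqrt_mul_sqrt (memLp_two_annulus_of_continuousOn hh')
        (memLp_two_annulus_of_continuousOn hL)

theorem exists_norm_circleIntegral_div_sub_le (hr : 0 ≤ r) (hrR : r < R) {z₀ : ℂ}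
    (hR : R ≤ ‖z₀‖) {ρ : ℝ} (hρ : ρ ∈ Ioo r R) :
    ∃ K > 0, ∀ h : ℂ → ℂ, DifferentiableOn ℂ h (annulus r R) →
      IntegrableOn (fun z => ‖deriv h z‖ ^ 2) (annulus r R) →
      ‖∮ w in C(0, ρ), h w / (w - z₀)‖ ≤ K * √(∫ z in annulus r R, ‖deriv h z‖ ^ 2) := by
  obtain ⟨a, hra, haR⟩ := exists_between hrR
  obtain ⟨b, hab, hbR⟩ := exists_between haR
  set C := √(∫ z in annulus a b, ‖log (1 - z / z₀)‖ ^ 2)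
  refine ⟨(C + 1) / (b - a), div_pos (by positivity) (sub_pos.2 hab), fun h hh hint => ?_⟩
  have hmono : ∫ z in annulus a b, ‖deriv h z‖ ^ 2 ≤ ∫ z in annulus r R, ‖deriv h z‖ ^ 2 :=
    setIntegral_mono_set hint (ae_of_all _ fun z => by positivity)
      (annulus_mono hra.le hbR.le).eventuallyLE
  rw [div_mul_eq_mul_div, le_div_iff₀ (sub_pos.2 hab), mul_comm]
  calc (b - a) * ‖∮ w in C(0, ρ), h w / (w - z₀)‖
      ≤ √(∫ z in annulus a b, ‖deriv h z‖ ^ 2) * C :=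
        mul_norm_circleIntegral_div_sub_le hr hra hab.le hbR hR hh hρ
    _ ≤ (C + 1) * √(∫ z in annulus r R, ‖deriv h z‖ ^ 2) := by
        rw [mul_comm]
        gcongr
        exact le_add_of_nonneg_right zero_le_one

theorem circleIntegral_div_sub_eq_zero_of_differentiableOn_ball {z₀ : ℂ} {g : ℂ → ℂ}
    (hg : DifferentiableOn ℂ g (ball 0 R)) (hR : R ≤ ‖z₀‖) {ρ : ℝ} (hρ₀ : 0 ≤ ρ) (hρR : ρ < R) :
    (∮ w in C(0, ρ), g w / (w - z₀)) = 0 := by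
  have hd : DifferentiableOn ℂ (fun w => g w / (w - z₀)) (ball 0 R) :=
    hg.div (differentiableOn_id.sub_const z₀) fun w hw =>
      sub_ne_zero.2 (ne_of_apply_ne norm ((mem_ball_zero_iff.1 hw).trans_le hR).ne)
  exact (hd.diffContOnCl_ball (closedBall_subset_ball hρR)).circleIntegral_eq_zero hρ₀

theorem circleIntegral_inv_div_sub {z₀ : ℂ} {ρ : ℝ} (hρ₀ : 0 < ρ) (hρ : ρ < ‖z₀‖) :
    (∮ w in C(0, ρ), w⁻¹ / (w - z₀)) = -(2 * Real.pi * I / z₀) := by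
  have hd : DifferentiableOn ℂ (fun w => (w - z₀)⁻¹) (closedBall 0 ρ) :=
    (differentiableOn_id.sub_const z₀).inv fun w hw =>
      sub_ne_zero.2 (ne_of_apply_ne norm ((mem_closedBall_zero_iff.1 hw).trans_lt hρ).ne)
  have hcauchy := hd.circleIntegral_sub_inv_smul (mem_ball_self hρ₀)
  simp only [sub_zero, smul_eq_mul, zero_sub, inv_neg] at hcauchy
  simp_rw [div_eq_mul_inv, hcauchy]
  ring

theorem integrableOn_norm_deriv_inv_sq (hr : 0 < r) :
    IntegrableOn (fun z => ‖deriv (fun w : ℂ => w⁻¹) z‖ ^ 2) (annulus r R) := by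
  simp_rw [deriv_inv]
  refine integrableOn_annulus_of_continuousOn fun z hz => ?_
  have hz0 : z ≠ 0 := fun h => hz.2 (h ▸ mem_ball_self hr)
  exact ((((continuousAt_id.pow 2).inv₀ (pow_ne_zero 2 hz0)).neg).norm.pow 2).continuousWithinAt

end Complex

theorem annulus_cauchy_functional_general
    (r : ℝ) (hr0 : 0 < r) (hr1 : r < 1)
    (z₀ : ℂ) (hz₀ : 1 < ‖z₀‖)
    (p : ℂ) :
    (∀ h : ℂ → ℂ, DifferentiableOn ℂ h {z : ℂ | r < ‖z‖ ∧ ‖z‖ < 1} →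
      ∀ ρ₁ ∈ Set.Ioo r 1, ∀ ρ₂ ∈ Set.Ioo r 1,
        (∮ w in C(0, ρ₁), h w / (w - z₀)) = ∮ w in C(0, ρ₂), h w / (w - z₀))
    ∧ (∃ M : ℝ, 0 < M ∧ ∀ h : ℂ → ℂ,
        DifferentiableOn ℂ h {z : ℂ | r < ‖z‖ ∧ ‖z‖ < 1} →
        IntegrableOn (fun z => ‖deriv h z‖ ^ 2) {z : ℂ | r < ‖z‖ ∧ ‖z‖ < 1} →
        ‖(2 * (Real.pi : ℂ) * Complex.I)⁻¹ * ∮ w in C(0, (r + 1) / 2), h w / (w - z₀)‖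
          ≤ M * Real.sqrt (‖h p‖ ^ 2 +
              ∫ z in {z : ℂ | r < ‖z‖ ∧ ‖z‖ < 1}, ‖deriv h z‖ ^ 2))
    ∧ (∀ g : ℂ → ℂ, DifferentiableOn ℂ g (ball (0 : ℂ) 1) →
        IntegrableOn (fun z => ‖deriv g z‖ ^ 2) (ball (0 : ℂ) 1) →
        (∮ w in C(0, (r + 1) / 2), g w / (w - z₀)) = 0)
    ∧ (∃ h : ℂ → ℂ, DifferentiableOn ℂ h {z : ℂ | r < ‖z‖ ∧ ‖z‖ < 1} ∧
        IntegrableOn (fun z => ‖deriv h z‖ ^ 2) {z : ℂ | r < ‖z‖ ∧ ‖z‖ < 1} ∧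
        (∮ w in C(0, (r + 1) / 2), h w / (w - z₀)) ≠ 0) := by
  have hmid : (r + 1) / 2 ∈ Ioo r 1 := ⟨by linarith, by linarith⟩
  have hz₀ann : ∀ w ∈ annulus r 1, w - z₀ ≠ 0 := fun w hw =>
    sub_ne_zero.2 (ne_of_apply_ne norm (hw.2.trans hz₀).ne)
  refine ⟨fun h hh ρ₁ h₁ ρ₂ h₂ => ?_, ?_, fun g hg _ => ?_, fun w => w⁻¹, ?_, ?_, ?_⟩
  · exact circleIntegral_eq_of_differentiableOn_annulus hr0.le
      (hh.div (differentiableOn_id.sub_const z₀) hz₀ann) h₁ h₂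
  · obtain ⟨K, hK, hbound⟩ := exists_norm_circleIntegral_div_sub_le hr0.le hr1 hz₀.le hmid
    refine ⟨(2 * Real.pi)⁻¹ * K, by positivity, fun h hh hint => ?_⟩
    rw [norm_mul, norm_inv, norm_mul, norm_mul, norm_I, mul_one, Complex.norm_two, norm_real,
      Real.norm_of_nonneg Real.pi_pos.le, mul_assoc]
    gcongr
    exact (hbound h hh hint).trans (by gcongr; exact le_add_of_nonneg_left (sq_nonneg _))
  · exact circleIntegral_div_sub_eq_zero_of_differentiableOn_ball hg hz₀.le (by linarith)
      hmid.2
  · exact fun z hz =>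
      (differentiableAt_inv (norm_pos_iff.1 (hr0.trans hz.1))).differentiableWithinAt
  · exact integrableOn_norm_deriv_inv_sq hr0
  · rw [circleIntegral_inv_div_sub (hr0.trans hmid.1) (hmid.2.trans hz₀)]
    simp [Real.pi_ne_zero, norm_pos_iff.1 (one_pos.trans hz₀)]

/-- On the annulus `Σ = {r < |z| < 1}`, the Cauchy-type functional
`Λ(h) = (1/2πi) ∮_{|w|=ρ} h(w)/(w - z₀) dw` (for `|z₀| > 1`) is independent of
`ρ ∈ (r,1)`, is bounded for the Dirichlet norm `(|h(p)|² + ∬_Σ |h'|²)^{1/2}`,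
vanishes on restrictions of disk Dirichlet functions, but is not identically zero. -/
theorem annulus_cauchy_functional
    (r : ℝ) (hr0 : 0 < r) (hr1 : r < 1)
    (z₀ : ℂ) (hz₀ : 1 < ‖z₀‖)
    (p : ℂ) (hp : p ∈ {z : ℂ | r < ‖z‖ ∧ ‖z‖ < 1}) :
    (∀ h : ℂ → ℂ, DifferentiableOn ℂ h {z : ℂ | r < ‖z‖ ∧ ‖z‖ < 1} →
      ∀ ρ₁ ∈ Set.Ioo r 1, ∀ ρ₂ ∈ Set.Ioo r 1,
        (∮ w in C(0, ρ₁), h w / (w - z₀)) = ∮ w in C(0, ρ₂), h w / (w - z₀))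
    ∧ (∃ M : ℝ, 0 < M ∧ ∀ h : ℂ → ℂ,
        DifferentiableOn ℂ h {z : ℂ | r < ‖z‖ ∧ ‖z‖ < 1} →
        IntegrableOn (fun z => ‖deriv h z‖ ^ 2) {z : ℂ | r < ‖z‖ ∧ ‖z‖ < 1} →
        ‖(2 * (Real.pi : ℂ) * Complex.I)⁻¹ * ∮ w in C(0, (r + 1) / 2), h w / (w - z₀)‖
          ≤ M * Real.sqrt (‖h p‖ ^ 2 +
              ∫ z in {z : ℂ | r < ‖z‖ ∧ ‖z‖ < 1}, ‖deriv h z‖ ^ 2))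
    ∧ (∀ g : ℂ → ℂ, DifferentiableOn ℂ g (ball (0 : ℂ) 1) →
        IntegrableOn (fun z => ‖deriv g z‖ ^ 2) (ball (0 : ℂ) 1) →
        (∮ w in C(0, (r + 1) / 2), g w / (w - z₀)) = 0)
    ∧ (∃ h : ℂ → ℂ, DifferentiableOn ℂ h {z : ℂ | r < ‖z‖ ∧ ‖z‖ < 1} ∧
        IntegrableOn (fun z => ‖deriv h z‖ ^ 2) {z : ℂ | r < ‖z‖ ∧ ‖z‖ < 1} ∧
        (∮ w in C(0, (r + 1) / 2), h w / (w - z₀)) ≠ 0) :=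
  annulus_cauchy_functional_general r hr0 hr1 z₀ hz₀ p
end

section
/- Every holomorphic function on the punctured disk 𝔻 \ {0} with finite Dirichlet energy ∬_{𝔻\{0}} |h'|² dA < ∞ extends to a holomorphic function on 𝔻. -/
/-!
Since `h'²` is holomorphic, the mean value property gives `|h'(z)|² ≤` the average of
`|h'|²` on every circle about `z`; integrating over the radius, `π ρ² |h'(z)|²` is at most
the Dirichlet energy of `h` on `B(z, ρ)`. With `ρ = |z|/2` this ball lies in the punctured disk
`B(0, 2|z|) \ {0}`, whose energy tends to `0` with `|z|` by absolute continuity of the integral;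
hence `z h'(z) → 0`, and `h'` has a removable singularity at `0`. Its extension has a primitive
on the disk, which differs from `h` by a constant on the connected punctured disk.
-/

open MeasureTheory Metric Set Filter Real Function
open scoped ENNReal Topology

theorem Real.norm_circleAverage_le {E : Type*} [NormedAddCommGroup E] [NormedSpace ℝ E]
    (f : ℂ → E) (c : ℂ) (R : ℝ) :
    ‖circleAverage f c R‖ ≤ circleAverage (fun z => ‖f z‖) c R := by
  rw [circleAverage_def, circleAverage_def, norm_smul, norm_inv,
    Real.norm_of_nonneg two_pi_pos.le, smul_eq_mul]
  gcongr
  exact intervalIntegral.norm_integral_le_integral_norm two_pi_pos.le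

theorem DiffContOnCl.norm_pow_le_circleAverage {f : ℂ → ℂ} {c : ℂ} {R : ℝ}
    (hf : DiffContOnCl ℂ f (ball c |R|)) (n : ℕ) :
    ‖f c‖ ^ n ≤ Real.circleAverage (fun z => ‖f z‖ ^ n) c R := by
  have hfn : DiffContOnCl ℂ (fun z => f z ^ n) (ball c |R|) :=
    ⟨hf.differentiableOn.pow n, hf.continuousOn.pow n⟩
  simpa only [hfn.circleAverage, norm_pow] using norm_circleAverage_le (fun z => f z ^ n) c R

theorem ofReal_two_pi_mul_circleAverage_eq_setLIntegral {g : ℂ → ℝ} {c : ℂ} {R : ℝ}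
    (hg : ContinuousOn g (sphere c |R|)) (hg0 : ∀ z, 0 ≤ g z) :
    ENNReal.ofReal (2 * π * circleAverage g c R)
      = ∫⁻ θ in Ioo (-π) π, ENNReal.ofReal (g (circleMap c R θ)) := by
  have hcont : Continuous fun θ => g (circleMap c R θ) :=
    hg.comp_continuous (continuous_circleMap c R) (circleMap_mem_sphere' c R)
  have hint : ∫ θ in (-π)..π, g (circleMap c R θ) = 2 * π * circleAverage g c R := by
    rw [circleAverage_eq_integral_add (-π), intervalIntegral.integral_comp_add_right
      (fun θ => g (circleMap c R θ)), smul_eq_mul, ← mul_assoc, mul_inv_cancel₀ two_pi_pos.ne',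
      one_mul]
    ring_nf
  rw [← hint, intervalIntegral.integral_of_le (by linarith [pi_pos]),
    ofReal_integral_eq_lintegral_ofReal hcont.integrableOn_Ioc
      (Eventually.of_forall fun θ => hg0 _),
    Measure.restrict_congr_set Ioo_ae_eq_Ioc]

theorem add_polarCoord_symm_eq_circleMap (c : ℂ) (p : ℝ × ℝ) :
    c + Complex.polarCoord.symm p = circleMap c p.1 p.2 := by
  simp only [Complex.polarCoord_symm_apply, circleMap, Complex.exp_mul_I]
  push_cast
  ring

theorem circleMap_mem_ball_iff {c : ℂ} {r θ ρ : ℝ} : circleMap c r θ ∈ ball c ρ ↔ |r| < ρ := by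
  rw [mem_ball, dist_eq_norm, circleMap_sub_center, norm_circleMap_zero]

theorem setLIntegral_ball_eq_setLIntegral_circleMap (G : ℂ → ℝ≥0∞) (c : ℂ) (ρ : ℝ) :
    ∫⁻ w in ball c ρ, G w
      = ∫⁻ p in Ioo 0 ρ ×ˢ Ioo (-π) π, ENNReal.ofReal p.1 * G (circleMap c p.1 p.2) := by
  have hpolar : ∀ p ∈ Complex.polarCoord.target,
      ENNReal.ofReal p.1 • (ball c ρ).indicator G (c + Complex.polarCoord.symm p)
        = (Iio ρ ×ˢ univ).indicator
            (fun p => ENNReal.ofReal p.1 * G (circleMap c p.1 p.2)) p := by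
    intro p hp
    have hp1 : 0 < p.1 := hp.1
    rw [add_polarCoord_symm_eq_circleMap, smul_eq_mul]
    by_cases hρ : p.1 < ρ
    · have hmem : circleMap c p.1 p.2 ∈ ball c ρ := by
        rwa [circleMap_mem_ball_iff, abs_of_pos hp1]
      rw [indicator_of_mem hmem, indicator_of_mem (by exact ⟨hρ, trivial⟩)]
    · have hmem : circleMap c p.1 p.2 ∉ ball c ρ := by
        rwa [circleMap_mem_ball_iff, abs_of_pos hp1]
      rw [indicator_of_notMem hmem, indicator_of_notMem (by exact fun h => hρ h.1), mul_zero]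
  calc ∫⁻ w in ball c ρ, G w = ∫⁻ w, (ball c ρ).indicator G (c + w) := by
        rw [← lintegral_indicator measurableSet_ball, lintegral_add_left_eq_self]
    _ = ∫⁻ p in Complex.polarCoord.target,
          (Iio ρ ×ˢ univ).indicator
            (fun p => ENNReal.ofReal p.1 * G (circleMap c p.1 p.2)) p := by
        rw [← Complex.lintegral_comp_polarCoord_symm]
        exact setLIntegral_congr_fun Complex.polarCoord.open_target.measurableSet hpolar
    _ = _ := by
        rw [lintegral_indicator (measurableSet_Iio.prod MeasurableSet.univ),
          Measure.restrict_restrict (measurableSet_Iio.prod MeasurableSet.univ),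
          Complex.polarCoord_target, prod_inter_prod, Iio_inter_Ioi, univ_inter]

theorem setLIntegral_Ioo_zero_ofReal {ρ : ℝ} (hρ : 0 ≤ ρ) :
    ∫⁻ r in Ioo 0 ρ, ENNReal.ofReal r = ENNReal.ofReal (ρ ^ 2 / 2) := by
  rw [Measure.restrict_congr_set Ioo_ae_eq_Ioc, ← ofReal_integral_eq_lintegral_ofReal
      (f := fun r => r) continuous_id.integrableOn_Ioc
      (ae_restrict_of_forall_mem measurableSet_Ioc fun r (hr : r ∈ Ioc 0 ρ) => hr.1.le),
    ← intervalIntegral.integral_of_le hρ, integral_id]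
  norm_num

theorem ofReal_mul_norm_pow_le_setLIntegral_ball {f : ℂ → ℂ} {c : ℂ} {ρ : ℝ} (hρ : 0 ≤ ρ)
    (hf : DifferentiableOn ℂ f (ball c ρ)) (n : ℕ) :
    ENNReal.ofReal (π * ρ ^ 2 * ‖f c‖ ^ n) ≤ ∫⁻ w in ball c ρ, ENNReal.ofReal (‖f w‖ ^ n) := by
  have hcircle : ∀ r ∈ Ioo 0 ρ, ENNReal.ofReal (2 * π * ‖f c‖ ^ n)
      ≤ ∫⁻ θ in Ioo (-π) π, ENNReal.ofReal (‖f (circleMap c r θ)‖ ^ n) := by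
    intro r hr
    have hsub : closedBall c |r| ⊆ ball c ρ :=
      closedBall_subset_ball (by rw [abs_of_pos hr.1]; exact hr.2)
    rw [← ofReal_two_pi_mul_circleAverage_eq_setLIntegral (g := fun z => ‖f z‖ ^ n)
      ((hf.continuousOn.mono (sphere_subset_closedBall.trans hsub)).norm.pow n)
      (fun z => by positivity)]
    gcongr
    exact (hf.diffContOnCl_ball hsub).norm_pow_le_circleAverage n
  have hmeas : AEMeasurable
      (fun p : ℝ × ℝ => ENNReal.ofReal p.1 * ENNReal.ofReal (‖f (circleMap c p.1 p.2)‖ ^ n))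
      ((volume.prod volume).restrict (Ioo 0 ρ ×ˢ Ioo (-π) π)) := by
    refine (ENNReal.measurable_ofReal.comp measurable_fst).aemeasurable.mul
      (ENNReal.measurable_ofReal.comp_aemeasurable (ContinuousOn.aemeasurable ?_
        (measurableSet_Ioo.prod measurableSet_Ioo)))
    have hcm : Continuous fun p : ℝ × ℝ => circleMap c p.1 p.2 := by
      unfold circleMap
      fun_prop
    refine (hf.continuousOn.comp hcm.continuousOn fun p hp => ?_).norm.pow n
    rw [circleMap_mem_ball_iff, abs_of_pos hp.1.1]
    exact hp.1.2
  calc ENNReal.ofReal (π * ρ ^ 2 * ‖f c‖ ^ n)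
      = ∫⁻ r in Ioo 0 ρ, ENNReal.ofReal r * ENNReal.ofReal (2 * π * ‖f c‖ ^ n) := by
        rw [lintegral_mul_const' _ _ ENNReal.ofReal_ne_top, setLIntegral_Ioo_zero_ofReal hρ,
          ← ENNReal.ofReal_mul (by positivity)]
        ring_nf
    _ ≤ ∫⁻ r in Ioo 0 ρ, ENNReal.ofReal r *
          ∫⁻ θ in Ioo (-π) π, ENNReal.ofReal (‖f (circleMap c r θ)‖ ^ n) :=
        setLIntegral_mono' measurableSet_Ioo fun r hr => by gcongr; exact hcircle r hr
    _ = ∫⁻ w in ball c ρ, ENNReal.ofReal (‖f w‖ ^ n) := by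
        simp_rw [← lintegral_const_mul' _ _ ENNReal.ofReal_ne_top]
        rw [setLIntegral_ball_eq_setLIntegral_circleMap, Measure.volume_eq_prod,
          setLIntegral_prod _ hmeas]

theorem tendsto_setLIntegral_ball_inter_nhds_zero {g : ℂ → ℝ≥0∞} {s : Set ℂ}
    (hg : ∫⁻ w in s, g w ≠ ∞) (c : ℂ) :
    Tendsto (fun ρ => ∫⁻ w in ball c ρ ∩ s, g w) (𝓝 0) (𝓝 0) := by
  have hvol : Tendsto (fun ρ => volume (ball c ρ)) (𝓝 0) (𝓝 0) := by
    have : Continuous fun ρ : ℝ => ENNReal.ofReal ρ ^ 2 * NNReal.pi :=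
      (ENNReal.continuous_mul_const ENNReal.coe_ne_top).comp
        ((ENNReal.continuous_pow 2).comp ENNReal.continuous_ofReal)
    simpa only [Complex.volume_ball, ENNReal.ofReal_zero, zero_pow two_ne_zero, zero_mul]
      using this.tendsto 0
  simp_rw [← Measure.restrict_restrict measurableSet_ball]
  exact tendsto_setLIntegral_zero hg (tendsto_of_tendsto_of_tendsto_of_le_of_le
    tendsto_const_nhds hvol (fun _ => zero_le) fun ρ => Measure.restrict_apply_le _ _)

theorem ball_half_dist_subset_ball_two_mul_dist_diff {X : Type*} [MetricSpace X] (z c : X) :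
    ball z (dist z c / 2) ⊆ ball c (2 * dist z c) \ {c} := by
  intro w hw
  rw [mem_ball] at hw
  have h1 := dist_triangle w z c
  have h2 := dist_triangle z w c
  rw [dist_comm z w] at h2
  have hwc : 0 < dist w c := by linarith
  exact ⟨mem_ball.2 (by linarith), (dist_pos.1 hwc).elim⟩

theorem tendsto_sub_mul_nhdsNE_of_integrableOn_norm_sq {f : ℂ → ℂ} {s : Set ℂ} {c : ℂ}
    (hs : s ∈ 𝓝[≠] c) (hf : DifferentiableOn ℂ f s)
    (hint : IntegrableOn (fun z => ‖f z‖ ^ 2) s) :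
    Tendsto (fun z => (z - c) * f z) (𝓝[≠] c) (𝓝 0) := by
  set E : ℂ → ℝ≥0∞ := fun z => ∫⁻ w in ball c (2 * dist z c) ∩ s, ENNReal.ofReal (‖f w‖ ^ 2)
  have hE_ne_top : ∀ z, E z ≠ ∞ := fun z =>
    (lt_of_le_of_lt (lintegral_mono_set inter_subset_right) hint.setLIntegral_lt_top).ne
  have hE : Tendsto E (𝓝[≠] c) (𝓝 0) := by
    have hdist : Tendsto (fun z => 2 * dist z c) (𝓝[≠] c) (𝓝 0) := by
      have : Continuous fun z : ℂ => 2 * dist z c := by fun_prop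
      simpa using (this.tendsto c).mono_left nhdsWithin_le_nhds
    exact (tendsto_setLIntegral_ball_inter_nhds_zero hint.setLIntegral_lt_top.ne c).comp hdist
  obtain ⟨r, hr, hrs⟩ := mem_nhdsWithin_iff.1 hs
  have hbound : ∀ z ∈ ball c (r / 2), ‖(z - c) * f z‖ ≤ √(4 / π * (E z).toReal) := by
    intro z hzr
    rw [mem_ball] at hzr
    have hsub : ball z (dist z c / 2) ⊆ ball c (2 * dist z c) ∩ s := fun w hw =>
      have hw' := ball_half_dist_subset_ball_two_mul_dist_diff z c hw
      ⟨hw'.1, hrs ⟨ball_subset_ball (by linarith) hw'.1, hw'.2⟩⟩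
    have hball : ENNReal.ofReal (π / 4 * ‖(z - c) * f z‖ ^ 2) ≤ E z :=
      calc ENNReal.ofReal (π / 4 * ‖(z - c) * f z‖ ^ 2)
          = ENNReal.ofReal (π * (dist z c / 2) ^ 2 * ‖f z‖ ^ 2) := by
            rw [norm_mul, ← dist_eq_norm]
            ring_nf
        _ ≤ ∫⁻ w in ball z (dist z c / 2), ENNReal.ofReal (‖f w‖ ^ 2) :=
            ofReal_mul_norm_pow_le_setLIntegral_ball (by positivity)
              (hf.mono (hsub.trans inter_subset_right)) 2
        _ ≤ E z := lintegral_mono_set hsub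
    rw [ENNReal.ofReal_le_iff_le_toReal (hE_ne_top z)] at hball
    rw [Real.le_sqrt (norm_nonneg _) (by positivity), div_mul_eq_mul_div, le_div_iff₀ pi_pos]
    linarith
  have hsqrt : Tendsto (fun z => √(4 / π * (E z).toReal)) (𝓝[≠] c) (𝓝 0) := by
    simpa using (((ENNReal.tendsto_toReal ENNReal.zero_ne_top).comp hE).const_mul (4 / π)).sqrt
  refine squeeze_zero_norm' ?_ hsqrt
  filter_upwards [mem_nhdsWithin_of_mem_nhds (ball_mem_nhds c (half_pos hr))] using hbound

theorem differentiableOn_update_limUnder_of_tendsto_sub_mul {f : ℂ → ℂ} {s : Set ℂ} {c : ℂ}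
    (hc : s ∈ 𝓝 c) (hd : DifferentiableOn ℂ f (s \ {c}))
    (ht : Tendsto (fun z => (z - c) * f z) (𝓝[≠] c) (𝓝 0)) :
    DifferentiableOn ℂ (update f c (limUnder (𝓝[≠] c) f)) s := by
  refine Complex.differentiableOn_update_limUnder_of_isLittleO hc hd ?_
  rw [Asymptotics.isLittleO_iff_tendsto' ?_]
  · have hconst : Tendsto (fun z => (z - c) * f c) (𝓝[≠] c) (𝓝 0) := by
      have : Continuous fun z => (z - c) * f c := by fun_prop
      simpa using (this.tendsto c).mono_left nhdsWithin_le_nhds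
    simpa only [div_inv_eq_mul, mul_sub, mul_comm, sub_zero] using ht.sub hconst
  · filter_upwards [self_mem_nhdsWithin] with z hz h0
    exact absurd (inv_eq_zero.1 h0) (sub_ne_zero.2 hz)

theorem isPreconnected_ball_diff_center {E : Type*} [NormedAddCommGroup E] [NormedSpace ℝ E]
    (h : 1 < Module.rank ℝ E) (c : E) (r : ℝ) : IsPreconnected (ball c r \ {c}) := by
  have hpolar :
      ball c r \ {c} = (fun p : ℝ × E => c + p.1 • p.2) '' (Ioo 0 r ×ˢ sphere 0 1) := by
    ext w
    constructor
    · rintro ⟨hwr, hwc⟩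
      have hd : 0 < ‖w - c‖ := norm_pos_iff.2 (sub_ne_zero.2 hwc)
      refine ⟨(‖w - c‖, ‖w - c‖⁻¹ • (w - c)), ⟨⟨hd, ?_⟩, ?_⟩, ?_⟩
      · rwa [← dist_eq_norm, ← mem_ball]
      · rw [mem_sphere_zero_iff_norm, norm_smul, norm_inv, norm_norm, inv_mul_cancel₀ hd.ne']
      · simp [smul_smul, mul_inv_cancel₀ hd.ne']
    · rintro ⟨⟨t, v⟩, ⟨⟨ht0, htr⟩, hv⟩, rfl⟩
      rw [mem_sphere_zero_iff_norm] at hv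
      have hnorm : ‖t • v‖ = t := by rw [norm_smul, hv, mul_one, Real.norm_of_nonneg ht0.le]
      refine ⟨?_, ?_⟩
      · rwa [mem_ball, dist_eq_norm, add_sub_cancel_left, hnorm]
      · rw [mem_singleton_iff, add_eq_left, ← norm_eq_zero, hnorm]
        exact ht0.ne'
  rw [hpolar]
  exact (isPreconnected_Ioo.prod (isPreconnected_sphere h 0 1)).image _ (by fun_prop)

/-- Every holomorphic function on the punctured unit disk with finite Dirichlet
energy extends holomorphically to the whole disk. -/
theorem punctured_disk_dirichlet_removable
    (h : ℂ → ℂ)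
    (hh : DifferentiableOn ℂ h (ball (0 : ℂ) 1 \ {0}))
    (hint : IntegrableOn (fun z => ‖deriv h z‖ ^ 2) (ball (0 : ℂ) 1 \ {0})) :
    ∃ g : ℂ → ℂ, DifferentiableOn ℂ g (ball (0 : ℂ) 1) ∧
      Set.EqOn g h (ball (0 : ℂ) 1 \ {0}) := by
  have hU : IsOpen (ball (0 : ℂ) 1 \ {0}) := isOpen_ball.sdiff isClosed_singleton
  have hh' : DifferentiableOn ℂ (deriv h) (ball 0 1 \ {0}) := hh.deriv hU
  have hdecay := tendsto_sub_mul_nhdsNE_of_integrableOn_norm_sq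
    (sdiff_mem_nhdsWithin_compl (ball_mem_nhds 0 one_pos) {0}) hh' hint
  obtain ⟨P, hP⟩ := (differentiableOn_update_limUnder_of_tendsto_sub_mul
    (ball_mem_nhds 0 one_pos) hh' hdecay).isExactOn_ball
  obtain ⟨a, ha⟩ := hU.exists_eq_add_of_deriv_eq (isPreconnected_ball_diff_center (by simp) 0 1)
    hh (fun z hz => (hP z hz.1).differentiableAt.differentiableWithinAt)
    (fun z hz => by rw [(hP z hz.1).deriv, update_of_ne hz.2])
  exact ⟨fun z => P z + a,
    fun z hz => ((hP z hz).differentiableAt.add_const a).differentiableWithinAt,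
    fun z hz => (ha hz).symm⟩
end
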